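/- Let G be a finite connected graph and H a connected induced subgraph of G with at least 2 vertices and diameter at most 2. Then QEC(H) ≤ QEC(G). -/
import Mathlib


/-- The quadratic embedding constant of a finite graph. -/
noncomputable def QEC {V : Type*} [Fintype V] (G : SimpleGraph V) : ℝ :=
  sSup {x : ℝ | ∃ f : V → ℝ,
    (∑ i, f i ^ 2) = 1 ∧ (∑ i, f i) = 0 ∧
    x = ∑ i, ∑ j, (G.dist i j : ℝ) * f i * f j}

/-- if H is a connected induced subgraph of a finite connected
graph G with at least 2 vertices and diameter at most 2, then QEC(H) ≤ QEC(G). -/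
theorem qec_induced_diam_two {V : Type*} [Fintype V] [DecidableEq V]
    (G : SimpleGraph V) (hG : G.Connected)
    (W : Finset V) (hW : 2 ≤ W.card) (H : SimpleGraph ↥W) (hH : H.Connected)
    (hind : ∀ i j : ↥W, H.Adj i j ↔ G.Adj (i : V) (j : V))
    (hdiam : ∀ i j : ↥W, H.dist i j ≤ 2) :
    QEC H ≤ QEC G := by
  -- the homomorphism from H to G
  let φ : H →g G := ⟨fun v => (v : V), fun {a b} h => (hind a b).mp h⟩
  -- distances agree
  have hdist : ∀ i j : ↥W, G.dist (i : V) (j : V) = H.dist i j := by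
    intro i j
    by_cases hij : i = j
    · subst hij; rw [SimpleGraph.dist_self, SimpleGraph.dist_self]
    have hcoe : (i : V) ≠ (j : V) := fun h => hij (Subtype.ext h)
    have hle : G.dist (i : V) (j : V) ≤ H.dist i j := by
      obtain ⟨p, hp⟩ := hH.exists_walk_length_eq_dist i j
      calc G.dist (i : V) (j : V) ≤ (p.map φ).length := SimpleGraph.dist_le _
        _ = p.length := SimpleGraph.Walk.length_map _ _
        _ = H.dist i j := hp
    by_cases hadj : H.Adj i j
    · rw [SimpleGraph.dist_eq_one_iff_adj.mpr ((hind i j).mp hadj),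
        SimpleGraph.dist_eq_one_iff_adj.mpr hadj]
    · have hGadj : ¬ G.Adj (i : V) (j : V) := fun h => hadj ((hind i j).mpr h)
      have h1 : G.dist (i : V) (j : V) ≠ 0 :=
        SimpleGraph.dist_ne_zero_iff_ne_and_reachable.mpr ⟨hcoe, hG (i : V) (j : V)⟩
      have h2 : G.dist (i : V) (j : V) ≠ 1 := fun h =>
        hGadj (SimpleGraph.dist_eq_one_iff_adj.mp h)
      have h3 : H.dist i j ≤ 2 := hdiam i j
      omega
  apply csSup_le_csSup
  · -- bounded above
    refine ⟨∑ i, ∑ j, (G.dist i j : ℝ), ?_⟩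
    rintro x ⟨f, hf1, hf0, rfl⟩
    have hsq : ∀ i, f i ^ 2 ≤ 1 := by
      intro i
      rw [← hf1]
      exact Finset.single_le_sum (fun j _ => sq_nonneg (f j)) (Finset.mem_univ i)
    refine Finset.sum_le_sum fun i _ => Finset.sum_le_sum fun j _ => ?_
    have hij : f i * f j ≤ 1 := by nlinarith [hsq i, hsq j]
    calc (G.dist i j : ℝ) * f i * f j = (G.dist i j : ℝ) * (f i * f j) := by ring
      _ ≤ (G.dist i j : ℝ) * 1 := by
          exact mul_le_mul_of_nonneg_left hij (by positivity)
      _ = (G.dist i j : ℝ) := mul_one _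
  · -- nonempty
    obtain ⟨a, ha, b, hb, hab⟩ := Finset.one_lt_card.mp (by omega : 1 < W.card)
    set A : ↥W := ⟨a, ha⟩
    set B : ↥W := ⟨b, hb⟩
    have hAB : A ≠ B := fun h => hab (congrArg Subtype.val h)
    set c : ℝ := (Real.sqrt 2)⁻¹ with hc
    have hc2 : c ^ 2 = 2⁻¹ := by
      rw [hc, inv_pow, Real.sq_sqrt (by norm_num : (0:ℝ) ≤ 2)]
    set f : ↥W → ℝ := fun v => if v = A then c else if v = B then -c else 0 with hf
    have hfA : f A = c := by simp [hf]
    have hfB : f B = -c := by simp [hf, hAB.symm]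
    have hsub : ({A, B} : Finset ↥W) ⊆ Finset.univ := Finset.subset_univ _
    have hout : ∀ v : ↥W, v ∉ ({A, B} : Finset ↥W) → f v = 0 := by
      intro v hv
      simp only [Finset.mem_insert, Finset.mem_singleton, not_or] at hv
      simp [hf, hv.1, hv.2]
    refine ⟨_, f, ?_, ?_, rfl⟩
    · rw [← Finset.sum_subset hsub (fun v _ hv => by rw [hout v hv]; ring),
        Finset.sum_pair hAB, hfA, hfB]
      rw [neg_pow, hc2]; norm_num
    · rw [← Finset.sum_subset hsub (fun v _ hv => hout v hv),
        Finset.sum_pair hAB, hfA, hfB]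
      ring
  · rintro x ⟨f, hf1, hf0, rfl⟩
    set F : V → ℝ := fun v => if h : v ∈ W then f ⟨v, h⟩ else 0 with hF
    have hzero : ∀ v, v ∉ W → F v = 0 := fun v hv => dif_neg hv
    have hcoe : ∀ i : ↥W, F (i : V) = f i := fun i => dif_pos i.2
    refine ⟨F, ?_, ?_, ?_⟩
    · rw [← Finset.sum_subset W.subset_univ (fun v _ hv => by rw [hzero v hv]; ring),
        ← Finset.sum_coe_sort W (fun v => F v ^ 2), ← hf1]
      exact Finset.sum_congr rfl fun i _ => by rw [hcoe]
    · rw [← Finset.sum_subset W.subset_univ (fun v _ hv => hzero v hv),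
        ← Finset.sum_coe_sort W F, ← hf0]
      exact Finset.sum_congr rfl fun i _ => hcoe i
    · rw [← Finset.sum_subset W.subset_univ
        (fun v _ hv => by
          simp only [hzero v hv]
          exact Finset.sum_eq_zero fun j _ => by ring),
        ← Finset.sum_coe_sort W]
      refine Finset.sum_congr rfl fun i _ => ?_
      rw [← Finset.sum_subset W.subset_univ
        (fun v _ hv => by rw [hzero v hv]; ring),
        ← Finset.sum_coe_sort W]
      refine Finset.sum_congr rfl fun j _ => ?_
      rw [hcoe i, hcoe j, hdist i j]
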